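/- arXiv:1503.07009 — 5 statements merged into one kernel-verified Lean document; each statement's English description precedes it below -/
import Mathlib

section
/- Let H be a real M×M matrix with H_ij ≥ 0 for all i ≠ j, whose columns sum to zero (H_ii = -∑_{k≠i} H_ki), and which is irreducible (there is no permutation matrix Q such that Q H Q⁻¹ has block upper-triangular form with a nontrivial zero block in the lower-left corner). Then the kernel of H is one-dimensional and is spanned by a vector all of whose entries are strictly positive. -/
/-!
Every vector `v` in the kernel of `H` has `|v|` in the kernel too: since the off-diagonal
entries are nonnegative, `H |v| ≥ 0` entrywise, and the entries of `H |v|` sum to zero because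
the columns of `H` do. For a nonnegative kernel vector `u`, the set where `u ≠ 0` receives no
nonzero entry of `H` from its complement, so by irreducibility it is empty or everything.
Hence a nonzero kernel vector has no zero entry, which bounds the kernel dimension by one;
the kernel is nontrivial since `(1, …, 1)` is a left null vector, and `|v|` is a positive
spanning vector.
-/

open Finset Matrix

namespace Matrix

variable {ι R : Type*} [Fintype ι]

def IsIndecomposable [Zero R] (H : Matrix ι ι R) : Prop :=
  ∀ S : Finset ι, (∀ i ∉ S, ∀ j ∈ S, H i j = 0) → S = ∅ ∨ S = univ

theorem one_vecMul_eq_zero_of_sum_col_eq_zero [NonAssocSemiring R] {H : Matrix ι ι R}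
    (hcolsum : ∀ j, ∑ i, H i j = 0) : 1 ᵥ* H = 0 := by
  ext j
  simpa [vecMul, dotProduct] using hcolsum j

theorem exists_mulVec_eq_zero_of_sum_col_eq_zero [Nonempty ι] [DecidableEq ι] [Field R]
    {H : Matrix ι ι R} (hcolsum : ∀ j, ∑ i, H i j = 0) : ∃ v, v ≠ 0 ∧ H *ᵥ v = 0 :=
  exists_mulVec_eq_zero_iff.mpr <| exists_vecMul_eq_zero_iff.mp
    ⟨1, one_ne_zero, one_vecMul_eq_zero_of_sum_col_eq_zero hcolsum⟩

variable [Field R] [LinearOrder R] [IsStrictOrderedRing R] {H : Matrix ι ι R}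

theorem mulVec_apply_le_of_le_of_eq (hoff : ∀ i j, i ≠ j → 0 ≤ H i j) {v w : ι → R}
    (hvw : v ≤ w) {i : ι} (hi : v i = w i) : (H *ᵥ v) i ≤ (H *ᵥ w) i := by
  refine sum_le_sum fun k _ => ?_
  by_cases hki : i = k
  · rw [← hki, hi]
  · exact mul_le_mul_of_nonneg_left (hvw k) (hoff i k hki)

theorem nonneg_mulVec_abs_of_mulVec_eq_zero (hoff : ∀ i j, i ≠ j → 0 ≤ H i j)
    {v : ι → R} (hv : H *ᵥ v = 0) : 0 ≤ H *ᵥ |v| := by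
  intro i
  rcases le_total 0 (v i) with hvi | hvi
  · calc (0 : ι → R) i = (H *ᵥ v) i := by rw [hv]
      _ ≤ (H *ᵥ |v|) i :=
        mulVec_apply_le_of_le_of_eq hoff (le_abs_self v) (by simp [abs_of_nonneg hvi])
  · calc (0 : ι → R) i = (H *ᵥ -v) i := by rw [mulVec_neg, hv, neg_zero]
      _ ≤ (H *ᵥ |v|) i :=
        mulVec_apply_le_of_le_of_eq hoff (neg_le_abs v) (by simp [abs_of_nonpos hvi])

theorem mulVec_abs_eq_zero (hoff : ∀ i j, i ≠ j → 0 ≤ H i j)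
    (hcolsum : ∀ j, ∑ i, H i j = 0) {v : ι → R} (hv : H *ᵥ v = 0) : H *ᵥ |v| = 0 := by
  have hnonneg := nonneg_mulVec_abs_of_mulVec_eq_zero hoff hv
  have hsum : ∑ i, (H *ᵥ |v|) i = 0 := by
    simpa [dotProduct, one_vecMul_eq_zero_of_sum_col_eq_zero hcolsum] using
      dotProduct_mulVec 1 H |v|
  ext i
  exact (sum_eq_zero_iff_of_nonneg fun i _ => hnonneg i).mp hsum i (mem_univ i)

theorem mul_eq_zero_of_mulVec_eq_zero_of_apply_eq_zero (hoff : ∀ i j, i ≠ j → 0 ≤ H i j)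
    {u : ι → R} (hu : 0 ≤ u) (hHu : H *ᵥ u = 0) {i : ι} (hi : u i = 0) (j : ι) :
    H i j * u j = 0 := by
  have hterms : ∀ k ∈ univ, 0 ≤ H i k * u k := fun k _ => by
    by_cases hki : i = k
    · simp [← hki, hi]
    · exact mul_nonneg (hoff i k hki) (hu k)
  exact (sum_eq_zero_iff_of_nonneg hterms).mp (congrFun hHu i) j (mem_univ j)

theorem IsIndecomposable.pos_of_mulVec_eq_zero (hirr : H.IsIndecomposable)
    (hoff : ∀ i j, i ≠ j → 0 ≤ H i j) {u : ι → R} (hu : 0 ≤ u) (hHu : H *ᵥ u = 0)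
    (hu0 : u ≠ 0) (i : ι) : 0 < u i := by
  classical
  let S := univ.filter (u · ≠ 0)
  have hclosed : ∀ k ∉ S, ∀ j ∈ S, H k j = 0 := by
    intro k hk j hj
    simp only [S, mem_filter, mem_univ, true_and, not_not] at hk hj
    have hHu_kj := mul_eq_zero_of_mulVec_eq_zero_of_apply_eq_zero hoff hu hHu hk j
    exact (mul_eq_zero.mp hHu_kj).resolve_right hj
  rcases hirr S hclosed with hempty | huniv
  · obtain ⟨j, hj⟩ := Function.ne_iff.mp hu0
    exact absurd hj (filter_eq_empty_iff.mp hempty (mem_univ j))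
  · have hi : i ∈ S := by rw [huniv]; exact mem_univ i
    exact (hu i).lt_of_ne' (mem_filter.mp hi).2

theorem IsIndecomposable.apply_ne_zero_of_mulVec_eq_zero (hirr : H.IsIndecomposable)
    (hoff : ∀ i j, i ≠ j → 0 ≤ H i j) (hcolsum : ∀ j, ∑ i, H i j = 0) {v : ι → R}
    (hv : H *ᵥ v = 0) (hv0 : v ≠ 0) (i : ι) : v i ≠ 0 :=
  abs_pos.mp <| hirr.pos_of_mulVec_eq_zero hoff (abs_nonneg v)
    (mulVec_abs_eq_zero hoff hcolsum hv) (by simpa using hv0) i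

theorem IsIndecomposable.eq_smul_of_mulVec_eq_zero (hirr : H.IsIndecomposable)
    (hoff : ∀ i j, i ≠ j → 0 ≤ H i j) (hcolsum : ∀ j, ∑ i, H i j = 0) {v w : ι → R}
    (hv : H *ᵥ v = 0) {i : ι} (hvi : v i ≠ 0) (hw : H *ᵥ w = 0) : w = (w i / v i) • v := by
  by_contra hne
  refine hirr.apply_ne_zero_of_mulVec_eq_zero hoff hcolsum (v := w - (w i / v i) • v) ?_
    (sub_ne_zero.mpr hne) i ?_
  · rw [mulVec_sub, mulVec_smul, hw, hv, smul_zero, sub_zero]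
  · simp [div_mul_cancel₀ _ hvi]

end Matrix

theorem Fin.exists_perm_mem_iff_lt_card {M : ℕ} (S : Finset (Fin M)) :
    ∃ σ : Equiv.Perm (Fin M), ∀ j, σ j ∈ S ↔ (j : ℕ) < #S := by
  have hcard : #{j : Fin M | (j : ℕ) < #S} = #S := by
    rw [Fin.card_filter_val_lt, min_eq_right (card_le_univ S |>.trans_eq (Fintype.card_fin M))]
  obtain ⟨σ, hσ⟩ := Equiv.Perm.exists_map_finset_eq _ _ hcard
  refine ⟨σ, fun j => ?_⟩
  nth_rw 1 [← hσ]
  simp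

theorem Matrix.isIndecomposable_of_not_exists_perm_block {M : ℕ} {R : Type*} [Zero R]
    {H : Matrix (Fin M) (Fin M) R}
    (hirr : ¬ ∃ (m : ℕ) (_ : 0 < m) (_ : m < M) (σ : Equiv.Perm (Fin M)),
        ∀ i j : Fin M, m ≤ (i : ℕ) → (j : ℕ) < m → H (σ i) (σ j) = 0) :
    H.IsIndecomposable := by
  intro S hS
  by_contra hS'
  obtain ⟨hne, hnuniv⟩ := not_or.mp hS'
  obtain ⟨σ, hσ⟩ := Fin.exists_perm_mem_iff_lt_card S
  refine hirr ⟨#S, card_pos.mpr (nonempty_iff_ne_empty.mpr hne), ?_, σ, fun i j hi hj => ?_⟩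
  · simpa using card_lt_card (ssubset_univ_iff.mpr hnuniv)
  · exact hS _ (fun h => (hσ i).mp h |>.not_ge hi) _ ((hσ j).mpr hj)

/-- **Kernel of an irreducible W-matrix.**
If `H` is a real `M × M` matrix with nonnegative off-diagonal entries, columns summing
to zero, and irreducible (no permutation similarity to a block upper-triangular form
with a nontrivial zero lower-left block), then the kernel of `H` is one-dimensional,
spanned by a vector with strictly positive entries. -/
theorem kernel_of_irreducible_W_matrix
    (M : ℕ) (H : Matrix (Fin M) (Fin M) ℝ)
    (hoffdiag : ∀ i j, i ≠ j → 0 ≤ H i j)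
    (hcol : ∀ i, H i i = -∑ k ∈ Finset.univ.erase i, H k i)
    (hirr : ¬ ∃ (m : ℕ) (_ : 0 < m) (_ : m < M) (σ : Equiv.Perm (Fin M)),
        ∀ i j : Fin M, m ≤ (i : ℕ) → (j : ℕ) < m → H (σ i) (σ j) = 0) :
    ∃ v : Fin M → ℝ, (∀ i, 0 < v i) ∧ H.mulVec v = 0 ∧
      ∀ w : Fin M → ℝ, H.mulVec w = 0 → ∃ c : ℝ, w = c • v := by
  have hcolsum : ∀ j, ∑ i, H i j = 0 := fun j => by
    rw [← add_sum_erase _ _ (mem_univ j), hcol j, neg_add_cancel]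
  have hind := isIndecomposable_of_not_exists_perm_block hirr
  rcases isEmpty_or_nonempty (Fin M) with hempty | hnonempty
  · exact ⟨0, isEmptyElim, Subsingleton.elim _ _, fun _ _ => ⟨0, Subsingleton.elim _ _⟩⟩
  obtain ⟨v, hv0, hv⟩ := exists_mulVec_eq_zero_of_sum_col_eq_zero hcolsum
  have hpos : ∀ i, 0 < |v| i := fun i =>
    abs_pos.mpr (hind.apply_ne_zero_of_mulVec_eq_zero hoffdiag hcolsum hv hv0 i)
  have hker := mulVec_abs_eq_zero hoffdiag hcolsum hv
  let i₀ : Fin M := Classical.arbitrary _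
  exact ⟨|v|, hpos, hker, fun w hw =>
    ⟨_, hind.eq_smul_of_mulVec_eq_zero hoffdiag hcolsum hker (hpos i₀).ne' hw⟩⟩
end

section
/- Let H be a real M×M matrix with H_ij ≥ 0 for all i ≠ j and whose columns sum to zero (H_ii = -∑_{k≠i} H_ki), and let η : ℝ → ℝ^M be differentiable with η'(t) = H^T η(t) for all t ≥ 0. Then the largest component of η is nonincreasing and the smallest component is nondecreasing: for all 0 ≤ s ≤ t, max_i η_i(t) ≤ max_i η_i(s) and min_i η_i(t) ≥ min_i η_i(s). -/
/-!
With `A = Hᵀ`, uniqueness for linear ODEs gives `η t = exp ((t - s) A) (η s)`. Nonnegative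
off-diagonal entries make `A + c I` entrywise nonnegative for large `c`, so
`exp (τ A) = e^{-cτ} exp (τ (A + c I))` maps nonnegative vectors to nonnegative vectors, i.e. it
is monotone; zero column sums of `H` mean that `A` kills constant vectors, which `exp (τ A)`
therefore fixes. A monotone map fixing constants cannot raise the maximum nor lower the minimum.
-/

open NormedSpace

namespace ContinuousLinearMap

variable {E : Type*} [NormedAddCommGroup E] [NormedSpace ℝ E] [CompleteSpace E]

theorem hasSum_exp_apply (T : E →L[ℝ] E) (x : E) :
    HasSum (fun n : ℕ => (n.factorial⁻¹ : ℝ) • (T ^ n) x) (exp T x) := by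
  rw [exp_eq_tsum ℝ]
  exact (expSeries_summable' (𝕂 := ℝ) T).hasSum.mapL (apply ℝ E x)

theorem exp_apply_eq_self_of_apply_eq_zero (T : E →L[ℝ] E) {x : E} (hx : T x = 0) :
    exp T x = x := by
  refine (hasSum_exp_apply T x).unique (hasSum_single 0 fun n hn => ?_) |>.trans (by simp)
  obtain ⟨m, rfl⟩ := Nat.exists_eq_succ_of_ne_zero hn
  rw [pow_succ, mul_apply_eq_comp, hx, map_zero, smul_zero]

theorem exp_eq_exp_neg_smul_exp_add_smul_one (T : E →L[ℝ] E) (c : ℝ) :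
    exp T = Real.exp (-c) • exp (T + c • 1) := by
  let _ : NormedAlgebra ℚ (E →L[ℝ] E) := NormedAlgebra.restrictScalars ℚ ℝ _
  have hc : c • (1 : E →L[ℝ] E) = algebraMap ℝ _ c :=
    (Algebra.algebraMap_eq_smul_one c).symm
  rw [exp_add_of_commute ((Commute.one_right T).smul_right c), hc, ← algebraMap_exp_comm,
    ← Real.exp_eq_exp_ℝ, Algebra.algebraMap_eq_smul_one, mul_smul_comm, mul_one, smul_smul,
    ← Real.exp_add, neg_add_cancel, Real.exp_zero, one_smul]

theorem hasDerivAt_exp_sub_smul_apply (T : E →L[ℝ] E) (s : ℝ) (x : E) (u : ℝ) :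
    HasDerivAt (fun v : ℝ => exp ((v - s) • T) x) (T (exp ((u - s) • T) x)) u := by
  have hexp : HasDerivAt (fun v : ℝ => exp ((v - s) • T)) (T * exp ((u - s) • T)) u := by
    simpa using (hasDerivAt_exp_smul_const' (𝕂 := ℝ) T (u - s)).comp_sub_const u s
  simpa using hexp.clm_apply (hasDerivAt_const u x)

theorem eq_exp_sub_smul_apply_of_hasDerivAt (T : E →L[ℝ] E) {f : ℝ → E} {s t : ℝ}
    (hst : s ≤ t) (hf : ∀ u ∈ Set.Icc s t, HasDerivAt f (T (f u)) u) :
    f t = exp ((t - s) • T) (f s) := by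
  have hflow := hasDerivAt_exp_sub_smul_apply T s (f s)
  refine ODE_solution_unique_of_mem_Icc_right (v := fun _ => T) (s := fun _ => Set.univ)
    (fun _ _ => T.lipschitz.lipschitzOnWith)
    (fun u hu => (hf u hu).continuousAt.continuousWithinAt)
    (fun u hu => (hf u (Set.Ico_subset_Icc_self hu)).hasDerivWithinAt)
    (fun _ _ => Set.mem_univ _)
    (fun u _ => (hflow u).continuousAt.continuousWithinAt)
    (fun u _ => (hflow u).hasDerivWithinAt) (fun _ _ => Set.mem_univ _)
    (by simp) (Set.right_mem_Icc.2 hst)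

variable [PartialOrder E] [IsOrderedAddMonoid E] [OrderClosedTopology E] [PosSMulMono ℝ E]

theorem exp_apply_nonneg_of_apply_nonneg {T : E →L[ℝ] E} (hT : ∀ x, 0 ≤ x → 0 ≤ T x)
    {x : E} (hx : 0 ≤ x) : 0 ≤ exp T x := by
  have hpow : ∀ n : ℕ, 0 ≤ (T ^ n) x := by
    intro n
    induction n with
    | zero => simpa using hx
    | succ n ih => rw [pow_succ', mul_apply_eq_comp]; exact hT _ ih
  exact (hasSum_exp_apply T x).nonneg fun n => smul_nonneg (by positivity) (hpow n)

theorem exp_apply_nonneg_of_add_smul_apply_nonneg {T : E →L[ℝ] E} {c : ℝ}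
    (hT : ∀ x, 0 ≤ x → 0 ≤ T x + c • x) {x : E} (hx : 0 ≤ x) : 0 ≤ exp T x := by
  rw [exp_eq_exp_neg_smul_exp_add_smul_one T c, smul_apply]
  exact smul_nonneg (Real.exp_pos _).le (exp_apply_nonneg_of_apply_nonneg (by simpa using hT) hx)

theorem monotone_exp_smul_of_add_smul_apply_nonneg {T : E →L[ℝ] E} {c : ℝ}
    (hT : ∀ x, 0 ≤ x → 0 ≤ T x + c • x) {τ : ℝ} (hτ : 0 ≤ τ) :
    Monotone ⇑(exp (τ • T)) := by
  have hτT : ∀ x, 0 ≤ x → 0 ≤ (τ • T) x + (τ * c) • x := fun x hx => by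
    rw [smul_apply, mul_smul, ← smul_add]
    exact smul_nonneg hτ (hT x hx)
  intro x y hxy
  rw [← sub_nonneg, ← map_sub]
  exact exp_apply_nonneg_of_add_smul_apply_nonneg hτT (sub_nonneg.2 hxy)

end ContinuousLinearMap

section FiniteExtrema

variable {ι : Type*} [Finite ι] [Nonempty ι] {P : (ι → ℝ) → ι → ℝ}

theorem Monotone.iSup_apply_le (hP : Monotone P) (hconst : ∀ m : ℝ, P (fun _ => m) = fun _ => m)
    (x : ι → ℝ) : ⨆ i, P x i ≤ ⨆ i, x i := by
  have hx : x ≤ fun _ => ⨆ i, x i := le_ciSup (Finite.bddAbove_range x)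
  exact ciSup_le fun i => (hP hx i).trans_eq (congrFun (hconst _) i)

theorem Monotone.iInf_le_apply (hP : Monotone P) (hconst : ∀ m : ℝ, P (fun _ => m) = fun _ => m)
    (x : ι → ℝ) : ⨅ i, x i ≤ ⨅ i, P x i := by
  have hx : (fun _ => ⨅ i, x i) ≤ x := ciInf_le (Finite.bddBelow_range x)
  exact le_ciInf fun i => (congrFun (hconst _) i).symm.trans_le (hP hx i)

end FiniteExtrema

namespace Matrix

variable {ι : Type*} [Fintype ι]

theorem mulVec_const_eq_zero {α : Type*} [NonUnitalNonAssocSemiring α] {A : Matrix ι ι α}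
    (hA : ∀ i, ∑ j, A i j = 0) (m : α) :
    A *ᵥ (fun _ => m) = 0 := by
  ext i
  simp [mulVec, dotProduct, ← Finset.sum_mul, hA i]

theorem exists_mulVec_add_smul_nonneg {A : Matrix ι ι ℝ}
    (hA : ∀ i j, i ≠ j → 0 ≤ A i j) :
    ∃ c : ℝ, ∀ x, 0 ≤ x → 0 ≤ A *ᵥ x + c • x := by
  classical
  refine ⟨∑ i, |A i i|, fun x hx i => ?_⟩
  have hdiag : 0 ≤ A i i + ∑ j, |A j j| := by
    linarith [neg_abs_le (A i i),
      Finset.single_le_sum (fun j _ => abs_nonneg (A j j)) (Finset.mem_univ i)]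
  have hoff : 0 ≤ ∑ j ∈ Finset.univ.erase i, A i j * x j :=
    Finset.sum_nonneg fun j hj => mul_nonneg (hA i j (Finset.ne_of_mem_erase hj).symm) (hx j)
  simp only [Pi.zero_apply, Pi.add_apply, Pi.smul_apply, smul_eq_mul, mulVec, dotProduct]
  rw [← Finset.add_sum_erase _ _ (Finset.mem_univ i)]
  nlinarith [mul_nonneg hdiag (hx i)]

end Matrix

/-- **Monotonicity of extreme components for the adjoint flow of a W-matrix.**
If `H` has nonnegative off-diagonal entries and columns summing to zero, and
`η' = Hᵀ η` for `t ≥ 0`, then the largest component of `η` is nonincreasing and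
the smallest component is nondecreasing. -/
theorem W_matrix_adjoint_max_min_monotone
    (M : ℕ) (hM : 0 < M) (H : Matrix (Fin M) (Fin M) ℝ)
    (hoffdiag : ∀ i j, i ≠ j → 0 ≤ H i j)
    (hcol : ∀ i, H i i = -∑ k ∈ Finset.univ.erase i, H k i)
    (η : ℝ → Fin M → ℝ)
    (hη : ∀ t : ℝ, 0 ≤ t → HasDerivAt η (H.transpose.mulVec (η t)) t) :
    ∀ s t : ℝ, 0 ≤ s → s ≤ t →
      (⨆ i, η t i) ≤ (⨆ i, η s i) ∧ (⨅ i, η s i) ≤ (⨅ i, η t i) := by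
  have : Nonempty (Fin M) := Fin.pos_iff_nonempty.mp hM
  intro s t hs hst
  let T := LinearMap.toContinuousLinearMap (Matrix.toLin' H.transpose)
  have hsol : η t = exp ((t - s) • T) (η s) :=
    T.eq_exp_sub_smul_apply_of_hasDerivAt hst fun u hu => hη u (hs.trans hu.1)
  obtain ⟨c, hc⟩ :=
    H.transpose.exists_mulVec_add_smul_nonneg fun i j hij => hoffdiag j i hij.symm
  have hmono : Monotone ⇑(exp ((t - s) • T)) :=
    ContinuousLinearMap.monotone_exp_smul_of_add_smul_apply_nonneg hc (sub_nonneg.2 hst)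
  have hcolsum : ∀ i, ∑ k, H k i = 0 := fun i => by
    rw [← Finset.add_sum_erase _ _ (Finset.mem_univ i), hcol i, neg_add_cancel]
  have hconst : ∀ m : ℝ, exp ((t - s) • T) (fun _ => m) = fun _ => m := fun m =>
    ContinuousLinearMap.exp_apply_eq_self_of_apply_eq_zero _ <|
      show (t - s) • H.transpose.mulVec (fun _ => m) = 0 by
        rw [Matrix.mulVec_const_eq_zero (A := H.transpose) hcolsum, smul_zero]
  rw [hsol]
  exact ⟨hmono.iSup_apply_le hconst _, hmono.iInf_le_apply hconst _⟩
end

section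
/- Let T = diag(1/τ_1, …, 1/τ_N) with τ_i > 0, let μ ∈ ℝ^N with μ_i ≥ 0 and ∑_i μ_i = 1, let A = (μ e^T − I) T, and let σ² > 0 and ω ≠ 0 be real. Then every complex eigenvalue λ of the matrix −ω² σ² T + A satisfies Re λ ≤ −ω² σ² / max_j τ_j < 0; in particular all eigenvalues lie strictly in the open left half plane. -/
/-!
With `c = ω²σ²`, the matrix `-c T + A = (μ eᵀ - (1 + c) I) T` has nonnegative off-diagonal
entries `μᵢ / τⱼ`, and its `k`-th column sums to `(1 - (1 + c)) / τₖ = -c / τₖ`. Gershgorin's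
theorem applied to the columns then places every eigenvalue in a disc centred at a diagonal entry
whose radius is the rest of that column, so `Re λ ≤ -c / τₖ ≤ -c / max τⱼ` for some `k`.
-/

open Matrix Finset

namespace Matrix

variable {n R : Type*} [Fintype n] [DecidableEq n] [CommRing R]

theorem hasEigenvalue_toLin'_transpose_iff [IsDomain R] (A : Matrix n n R) (l : R) :
    Module.End.HasEigenvalue (toLin' Aᵀ) l ↔ Module.End.HasEigenvalue (toLin' A) l := by
  simp only [Module.End.hasEigenvalue_iff_isRoot_charpoly, charpoly_toLin', charpoly_transpose]

theorem hasEigenvalue_toLin'_of_mulVec_eq_smul {A : Matrix n n R} {l : R}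
    {v : n → R} (hv : v ≠ 0) (h : A *ᵥ v = l • v) : Module.End.HasEigenvalue (toLin' A) l :=
  Module.End.hasEigenvalue_of_hasEigenvector
    ⟨Module.End.mem_eigenspace_iff.mpr (by rwa [toLin'_apply]), hv⟩

theorem exists_re_le_of_hasEigenvalue {A : Matrix n n ℂ} {l : ℂ}
    (hl : Module.End.HasEigenvalue (toLin' A) l) :
    ∃ k, l.re ≤ (A k k).re + ∑ i ∈ univ.erase k, ‖A i k‖ := by
  obtain ⟨k, hk⟩ := eigenvalue_mem_ball ((hasEigenvalue_toLin'_transpose_iff A l).mpr hl)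
  refine ⟨k, ?_⟩
  rw [mem_closedBall_iff_norm] at hk
  have := (Complex.re_le_norm (l - A k k)).trans hk
  simp only [transpose_apply, Complex.sub_re] at this
  linarith

theorem exists_re_le_sum_col_of_hasEigenvalue {M : Matrix n n ℝ}
    (hM : ∀ i j, i ≠ j → 0 ≤ M i j) {l : ℂ}
    (hl : Module.End.HasEigenvalue (toLin' (M.map ((↑) : ℝ → ℂ))) l) :
    ∃ k, l.re ≤ ∑ i, M i k := by
  obtain ⟨k, hk⟩ := exists_re_le_of_hasEigenvalue hl
  refine ⟨k, hk.trans_eq ?_⟩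
  have hoff : ∀ i ∈ univ.erase k, ‖M.map ((↑) : ℝ → ℂ) i k‖ = M i k := fun i hi => by
    rw [map_apply, Complex.norm_real, Real.norm_of_nonneg (hM i k (ne_of_mem_erase hi))]
  rw [map_apply, Complex.ofReal_re, sum_congr rfl hoff]
  exact add_sum_erase univ (fun i => M i k) (mem_univ k)

end Matrix

section FourierMode

variable {n : Type*} [Fintype n] [DecidableEq n]

noncomputable def fourierModeMatrix (τ μ : n → ℝ) (c : ℝ) : Matrix n n ℝ :=
  (-c) • diagonal (fun i => (τ i)⁻¹) +
    (vecMulVec μ (fun _ => (1 : ℝ)) - 1) * diagonal fun i => (τ i)⁻¹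

theorem fourierModeMatrix_apply (τ μ : n → ℝ) (c : ℝ) (i j : n) :
    fourierModeMatrix τ μ c i j = (μ i - if i = j then 1 + c else 0) / τ j := by
  simp only [fourierModeMatrix, Matrix.add_apply, Matrix.smul_apply, diagonal_apply, mul_diagonal,
    Matrix.sub_apply, vecMulVec_apply, one_apply, smul_eq_mul]
  split_ifs with h <;> subst_vars <;> ring

theorem fourierModeMatrix_nonneg_of_ne {τ μ : n → ℝ} (hτ : ∀ i, 0 ≤ τ i) (hμ : ∀ i, 0 ≤ μ i)
    (c : ℝ) {i j : n} (hij : i ≠ j) : 0 ≤ fourierModeMatrix τ μ c i j := by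
  rw [fourierModeMatrix_apply, if_neg hij, sub_zero]
  exact div_nonneg (hμ i) (hτ j)

theorem sum_fourierModeMatrix_col (τ : n → ℝ) {μ : n → ℝ} (hμ : ∑ i, μ i = 1) (c : ℝ) (k : n) :
    ∑ i, fourierModeMatrix τ μ c i k = -c / τ k := by
  simp only [fourierModeMatrix_apply, ← sum_div, sum_sub_distrib, hμ, sum_ite_eq', mem_univ,
    if_true]
  ring

end FourierMode

/-- **Fourier modes of the internal-states diffusion system are strictly damped.**
With `T = diag (1/τᵢ)`, `τᵢ > 0`, `μᵢ ≥ 0`, `∑ μᵢ = 1`, `A = (μ eᵀ - I) T`,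
`σ² > 0` and `ω ≠ 0`, every complex eigenvalue `l` of `-ω² σ² T + A` satisfies
`Re l ≤ -ω² σ² / max τⱼ < 0`. -/
theorem internal_states_fourier_modes_damped
    (N : ℕ) (hN : 0 < N) (τ : Fin N → ℝ) (hτ : ∀ i, 0 < τ i)
    (μ : Fin N → ℝ) (hμ0 : ∀ i, 0 ≤ μ i) (hμ : ∑ i, μ i = 1)
    (σ2 ω : ℝ) (hσ2 : 0 < σ2) (hω : ω ≠ 0) :
    ∀ (l : ℂ) (v : Fin N → ℂ), v ≠ 0 →
      Matrix.mulVec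
        (Matrix.map
          ((-(ω ^ 2 * σ2)) • Matrix.diagonal (fun i => (τ i)⁻¹) +
            (Matrix.vecMulVec μ (fun _ => (1 : ℝ)) - 1) * Matrix.diagonal fun i => (τ i)⁻¹)
          (fun x : ℝ => (x : ℂ))) v = l • v →
      l.re ≤ -(ω ^ 2 * σ2) / (Finset.univ.sup' ⟨⟨0, hN⟩, Finset.mem_univ _⟩ τ) ∧
      -(ω ^ 2 * σ2) / (Finset.univ.sup' ⟨⟨0, hN⟩, Finset.mem_univ _⟩ τ) < 0 := by
  intro l v hv hlv
  have hc : 0 < ω ^ 2 * σ2 := by positivity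
  have hτ_le (k : Fin N) : τ k ≤ Finset.univ.sup' ⟨⟨0, hN⟩, Finset.mem_univ _⟩ τ :=
    Finset.le_sup' τ (Finset.mem_univ k)
  obtain ⟨k, hk⟩ := Matrix.exists_re_le_sum_col_of_hasEigenvalue
    (fun _ _ => fourierModeMatrix_nonneg_of_ne (fun i => (hτ i).le) hμ0 _)
    (Matrix.hasEigenvalue_toLin'_of_mulVec_eq_smul hv hlv)
  rw [sum_fourierModeMatrix_col τ hμ] at hk
  refine ⟨hk.trans ?_, div_neg_of_neg_of_pos (neg_neg_of_pos hc) ((hτ k).trans_le (hτ_le k))⟩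
  rw [neg_div, neg_div, neg_le_neg_iff]
  exact div_le_div_of_nonneg_left hc.le (hτ k) (hτ_le k)
end

section
/- Let T = diag(1/τ_1, …, 1/τ_N) with τ_i > 0, let μ ∈ ℝ^N with μ_i ≥ 0 and ∑_i μ_i = 1, let A = (μ e^T − I) T, and let k > 0. Then every complex eigenvalue λ of the matrix A − k T satisfies Re λ ≤ −k / max_j τ_j < 0, i.e. all eigenvalues of A − kT lie strictly in the open left half plane. -/
/-!
The off-diagonal entries `μᵢ / τⱼ` of `A - kT` are nonnegative and its `j`-th column sums to
`(∑ μᵢ - 1 - k) / τⱼ = -k / τⱼ`. Gershgorin's theorem applied to the columns therefore puts every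
eigenvalue `l` in a disc around a diagonal entry `dⱼ` whose radius is `-k / τⱼ - dⱼ`, so
`Re l ≤ -k / τⱼ ≤ -k / max τ`.
-/

open Finset Matrix

section Gershgorin

variable {n : Type*} [Fintype n] [DecidableEq n]

theorem Matrix.hasEigenvalue_toLin'_transpose_iff_s9 {K : Type*} [Field K] {A : Matrix n n K} {l : K} :
    Module.End.HasEigenvalue (toLin' Aᵀ) l ↔ Module.End.HasEigenvalue (toLin' A) l := by
  simp only [Module.End.hasEigenvalue_iff_isRoot_charpoly, charpoly_toLin',
    charpoly_transpose]

theorem eigenvalue_mem_ball_col {K : Type*} [NormedField K] {A : Matrix n n K} {l : K}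
    (hl : Module.End.HasEigenvalue (toLin' A) l) :
    ∃ j, l ∈ Metric.closedBall (A j j) (∑ i ∈ univ.erase j, ‖A i j‖) :=
  eigenvalue_mem_ball (Matrix.hasEigenvalue_toLin'_transpose_iff_s9.2 hl)

theorem exists_re_le_sum_col_of_nonneg_offDiag {B : Matrix n n ℝ}
    (hB : ∀ i j, i ≠ j → 0 ≤ B i j) {l : ℂ}
    (hl : Module.End.HasEigenvalue (toLin' (B.map ((↑) : ℝ → ℂ))) l) :
    ∃ j, l.re ≤ ∑ i, B i j := by
  obtain ⟨j, hj⟩ := eigenvalue_mem_ball_col hl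
  rw [mem_closedBall_iff_norm] at hj
  refine ⟨j, ?_⟩
  have hradius : ∑ i ∈ univ.erase j, ‖(B.map ((↑) : ℝ → ℂ)) i j‖ = ∑ i ∈ univ.erase j, B i j :=
    sum_congr rfl fun i hi => by
      rw [map_apply, Complex.norm_real, Real.norm_of_nonneg (hB i j (ne_of_mem_erase hi))]
  calc l.re = B j j + (l - B j j).re := by simp
    _ ≤ B j j + ∑ i ∈ univ.erase j, B i j := by
        rw [← hradius]; gcongr; exact (Complex.re_le_norm _).trans hj
    _ = ∑ i, B i j := add_sum_erase _ (fun i => B i j) (mem_univ j)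

end Gershgorin

section AnnihilationGenerator

variable {n : Type*} [Fintype n] [DecidableEq n] (τ μ : n → ℝ) (k : ℝ)

/-- The matrix `A - kT` with `A = (μ eᵀ - I) T` and `T = diag (1/τᵢ)`. -/
noncomputable def annihilationGenerator : Matrix n n ℝ :=
  (vecMulVec μ (fun _ => (1 : ℝ)) - 1) * diagonal (fun i => (τ i)⁻¹) -
    k • diagonal fun i => (τ i)⁻¹

theorem annihilationGenerator_apply (i j : n) :
    annihilationGenerator τ μ k i j = (μ i - (1 + k) * (1 : Matrix n n ℝ) i j) * (τ j)⁻¹ := by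
  simp only [annihilationGenerator, Matrix.sub_apply, mul_diagonal, Matrix.smul_apply,
    vecMulVec_apply, smul_eq_mul, diagonal_apply, one_apply]
  split_ifs with h
  · subst h; ring
  · ring

theorem annihilationGenerator_nonneg_of_ne (hτ : ∀ i, 0 < τ i) (hμ0 : ∀ i, 0 ≤ μ i) {i j : n}
    (hij : i ≠ j) : 0 ≤ annihilationGenerator τ μ k i j := by
  rw [annihilationGenerator_apply, one_apply_ne hij, mul_zero, sub_zero]
  exact mul_nonneg (hμ0 i) (inv_nonneg.2 (hτ j).le)

theorem sum_annihilationGenerator_col (j : n) :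
    ∑ i, annihilationGenerator τ μ k i j = (∑ i, μ i - 1 - k) * (τ j)⁻¹ := by
  simp only [annihilationGenerator_apply, ← sum_mul, sum_sub_distrib, ← mul_sum, one_apply,
    sum_ite_eq', mem_univ, if_true]
  ring

end AnnihilationGenerator

/-- **The generator of the internal-states annihilation model I is strictly stable.**
With `T = diag (1/τᵢ)`, `τᵢ > 0`, `μᵢ ≥ 0`, `∑ μᵢ = 1`, `A = (μ eᵀ - I) T` and `k > 0`,
every complex eigenvalue `l` of `A - k T` satisfies `Re l ≤ -k / max τⱼ < 0`. -/
theorem annihilation_modelI_generator_stable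
    (N : ℕ) (hN : 0 < N) (τ : Fin N → ℝ) (hτ : ∀ i, 0 < τ i)
    (μ : Fin N → ℝ) (hμ0 : ∀ i, 0 ≤ μ i) (hμ : ∑ i, μ i = 1)
    (k : ℝ) (hk : 0 < k) :
    ∀ (l : ℂ) (v : Fin N → ℂ), v ≠ 0 →
      Matrix.mulVec
        (Matrix.map
          ((Matrix.vecMulVec μ (fun _ => (1 : ℝ)) - 1) * Matrix.diagonal (fun i => (τ i)⁻¹) -
            k • Matrix.diagonal fun i => (τ i)⁻¹)
          (fun x : ℝ => (x : ℂ))) v = l • v →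
      l.re ≤ -k / (Finset.univ.sup' ⟨⟨0, hN⟩, Finset.mem_univ _⟩ τ) ∧
      -k / (Finset.univ.sup' ⟨⟨0, hN⟩, Finset.mem_univ _⟩ τ) < 0 := by
  intro l v hv hlv
  set τmax := univ.sup' ⟨⟨0, hN⟩, mem_univ _⟩ τ
  have hτmax : 0 < τmax := (hτ ⟨0, hN⟩).trans_le (le_sup' τ (mem_univ _))
  have heig : Module.End.HasEigenvalue (toLin' ((annihilationGenerator τ μ k).map (↑))) l :=
    Module.End.hasEigenvalue_of_hasEigenvector
      ⟨Module.End.mem_eigenspace_iff.2 (by rw [toLin'_apply]; exact hlv), hv⟩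
  obtain ⟨j, hj⟩ := exists_re_le_sum_col_of_nonneg_offDiag
    (fun _ _ => annihilationGenerator_nonneg_of_ne τ μ k hτ hμ0) heig
  rw [sum_annihilationGenerator_col, hμ, sub_self, zero_sub, ← div_eq_mul_inv] at hj
  refine ⟨hj.trans ?_, div_neg_of_neg_of_pos (neg_neg_of_pos hk) hτmax⟩
  rw [neg_div, neg_div, neg_le_neg_iff]
  exact div_le_div_of_nonneg_left hk.le (hτ j) (le_sup' τ (mem_univ j))
end

section
/- Let A be a real N×N matrix with e^T A = 0, let K_{ijk} and L_{ijk} (i,j,k = 1,…,N) be arbitrary real three-index arrays, and let u∞, v∞ ∈ ℝ^N. Define the N×N blocks: K₁₁ = diag_i(∑_{j,k} K_{ijk} (v∞)_j), K₂₂ = diag_i(∑_{j,k} K_{jik} (u∞)_j), L₃ = diag_i(∑_{j,k} L_{jki}), (L₁)_{ij} = ∑_k L_{ikj}, (L₂)_{ij} = ∑_k L_{kij}, (K₁₂)_{ij} = ∑_k K_{ijk} (u∞)_i, (K₂₁)_{ij} = ∑_k K_{jik} (v∞)_i, (K₃₂)_{ij} = ∑_k K_{kji} (u∞)_k, (K₃₁)_{ij}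 = ∑_k K_{jki} (v∞)_k, and the 3N×3N block matrix B = [[A − K₁₁, −K₁₂, L₁], [−K₂₁, A − K₂₂, L₂], [K₃₁, K₃₂, A − L₃]]. Then the weighted stacked vector (e; e; 2e) is a left null vector of B: (e^T, e^T, 2e^T) B = 0. -/
/-!
Weighted by `(1, 1, 2)`, every column of the Jacobian sums to zero. The copies of `A` on the
diagonal contribute nothing since `eᵀ A = 0`. In each column the reaction terms are three
copies of a single double sum, up to the order of summation: two with weight `1` and one with
weight `2` and the opposite sign, because one `C`-molecule is made from (or decays into) one
`A`- and one `B`-molecule.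
-/

open Matrix

theorem Matrix.sum_sub_diagonal_apply_of_vecMul_one_eq_zero {ι R : Type*} [Fintype ι]
    [DecidableEq ι] [CommRing R] {A : Matrix ι ι R} (hA : vecMul (fun _ => 1) A = 0)
    (d : ι → R) (j : ι) : ∑ i, (A - diagonal d) i j = -d j := by
  have hcol : ∑ i, A i j = 0 := by simpa [vecMul, dotProduct] using congrFun hA j
  simp [Finset.sum_sub_distrib, diagonal_apply, hcol]

/-- **Weighted left null vector of the bimolecular Jacobian.**
For the Jacobian `B` of the internal-states mean-field system for the reversible
bimolecular reaction `Aᵢ + Bⱼ ⇌ Cₖ` linearized at `(uInf, vInf, w∞)`, the weighted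
stacked vector `(e; e; 2e)` is a left null vector of `B`, provided `eᵀ A = 0`. -/
theorem bimolecular_jacobian_weighted_left_null_vector
    (N : ℕ) (A : Matrix (Fin N) (Fin N) ℝ)
    (hA : Matrix.vecMul (fun _ => (1 : ℝ)) A = 0)
    (K L : Fin N → Fin N → Fin N → ℝ)
    (uInf vInf : Fin N → ℝ) :
    Matrix.vecMul
      (Sum.elim (fun _ : Fin N => (1 : ℝ))
        (Sum.elim (fun _ : Fin N => (1 : ℝ)) (fun _ : Fin N => (2 : ℝ))))
      (Matrix.of
        (fun p q : Fin N ⊕ (Fin N ⊕ Fin N) =>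
          match p, q with
          | Sum.inl i, Sum.inl j =>
              (A - Matrix.diagonal fun i' => ∑ j', ∑ k', K i' j' k' * vInf j') i j
          | Sum.inl i, Sum.inr (Sum.inl j) => -(∑ k', K i j k' * uInf i)
          | Sum.inl i, Sum.inr (Sum.inr j) => ∑ k', L i k' j
          | Sum.inr (Sum.inl i), Sum.inl j => -(∑ k', K j i k' * vInf i)
          | Sum.inr (Sum.inl i), Sum.inr (Sum.inl j) =>
              (A - Matrix.diagonal fun i' => ∑ j', ∑ k', K j' i' k' * uInf j') i j
          | Sum.inr (Sum.inl i), Sum.inr (Sum.inr j) => ∑ k', L k' i j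
          | Sum.inr (Sum.inr i), Sum.inl j => ∑ k', K j k' i * vInf k'
          | Sum.inr (Sum.inr i), Sum.inr (Sum.inl j) => ∑ k', K k' j i * uInf k'
          | Sum.inr (Sum.inr i), Sum.inr (Sum.inr j) =>
              (A - Matrix.diagonal fun i' => ∑ j', ∑ k', L j' k' i') i j)) = 0 := by
  funext q
  rcases q with j | j | j <;>
    simp only [vecMul, dotProduct, Fintype.sum_sum_type, Sum.elim_inl, Sum.elim_inr, of_apply,
      Pi.zero_apply, sum_sub_diagonal_apply_of_vecMul_one_eq_zero hA, one_mul,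
      ← Finset.mul_sum, Finset.sum_neg_distrib]
  · rw [Finset.sum_comm (f := fun i k => K j k i * vInf k)]; ring
  · rw [Finset.sum_comm (f := fun i k => K k j i * uInf k)]; ring
  · rw [Finset.sum_comm (f := fun i k => L k i j)]; ring
end
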